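/- If a continuous semiflow on a Riemannian manifold M admits a proper continuous function V and a subset S ⊆ M such that V is constant on each connected component of S, each connected component of S is isolated (open in S), and V is strictly decreasing along trajectories outside S, then the chain recurrent set of Φ is contained in S. -/

import Mathlib

/-- An autonomous continuous semiflow on a metric space. -/
structure Semiflow (M : Type*) [MetricSpace M] where
  toFun : ℝ → M → M
  cont : Continuous fun p : ℝ × M => toFun p.1 p.2
  map_zero : ∀ x, toFun 0 x = x
  map_add : ∀ {s t : ℝ}, 0 ≤ s → 0 ≤ t → ∀ x, toFun t (toFun s x) = toFun (t + s) x

/-- A closed `(ε, T)`-chain at `x`. -/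
def Semiflow.IsChain {M : Type*} [MetricSpace M] (Φ : Semiflow M) (ε T : ℝ) (x : M) : Prop :=
  ∃ (n : ℕ) (xs : Fin (n + 1) → M) (ts : Fin n → ℝ),
    0 < n ∧ xs 0 = x ∧ xs (Fin.last n) = x ∧
    ∀ i : Fin n, T < ts i ∧ dist (Φ.toFun (ts i) (xs i.castSucc)) (xs i.succ) < ε

/-- The chain recurrent set of a semiflow. -/
def Semiflow.chainRecurrentSet {M : Type*} [MetricSpace M] (Φ : Semiflow M) : Set M :=
  {x | ∀ ε T : ℝ, 0 < ε → 0 < T → Φ.IsChain ε T x}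

/-- The equilibrium set of a semiflow. -/
def Semiflow.equilibria {M : Type*} [MetricSpace M] (Φ : Semiflow M) : Set M :=
  {x | ∀ t : ℝ, 0 ≤ t → Φ.toFun t x = x}

/-!
Along every trajectory `V` is nonincreasing: it drops strictly off `S`, and while the orbit
stays in `S` it stays in one component, on which `V` is constant. Suppose `x ∉ S` is chain
recurrent, so `V (Φ₁ x) < V x`. The points of `{V ≤ V x}` where `V ∘ Φ₁ = V` form a compact
subset of `S`, covered by finitely many isolated components, so `V` takes only finitely many
values there; choose a level `b ∈ (V (Φ₁ x), V x)` avoiding them. Then `V ∘ Φ₁ < b` on the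
compact set `{V ≤ b} ∪ {x}`, hence `V ∘ Φ_t ≤ b' < b` there for all `t ≥ 1`, and a small
`ε`-neighbourhood of `{V ≤ b'}` lies in `{V < b}`. So every `(ε, 1)`-chain from `x` stays in
`{V ≤ b}` and cannot return to `x`.
-/

open Set Filter Topology

theorem antitoneOn_of_eventually_nhdsGT_le {g : ℝ → ℝ} {s : Set ℝ} (hs : s.OrdConnected)
    (hg : ContinuousOn g s) (hloc : ∀ x ∈ s, ∀ᶠ z in 𝓝[>] x, g z ≤ g x) : AntitoneOn g s := by
  intro a ha b hb hab
  have hIcc : Icc a b ⊆ s := hs.out ha hb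
  refine image_le_of_liminf_slope_right_le_deriv_boundary (hg.mono hIcc) (B := fun _ ↦ g a)
    (B' := 0) le_rfl continuousOn_const (fun _ _ ↦ hasDerivWithinAt_const _ _ _) ?_ ⟨hab, le_rfl⟩
  intro x hx r hr
  refine (((hloc x (hIcc (Ico_subset_Icc_self hx))).and self_mem_nhdsWithin).mono ?_).frequently
  rintro z ⟨hgz, hxz : x < z⟩
  rw [slope_def_field]
  exact (div_nonpos_of_nonpos_of_nonneg (sub_nonpos.2 hgz) (sub_nonneg.2 hxz.le)).trans_lt hr

theorem IsCompact.finite_image_of_isOpen_connectedComponentIn {X β : Type*} [TopologicalSpace X]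
    {V : X → β} {S K : Set X} (hK : IsCompact K) (hKS : K ⊆ S)
    (hconst : ∀ x ∈ S, ∀ y ∈ connectedComponentIn S x, V y = V x)
    (hiso : ∀ x ∈ S, ∃ U : Set X, IsOpen U ∧ U ∩ S = connectedComponentIn S x) :
    (V '' K).Finite := by
  choose U hUopen hUS using fun i : K ↦ hiso i (hKS i.2)
  have hmem : ∀ i : K, i.1 ∈ U i := fun i ↦
    ((hUS i).symm ▸ mem_connectedComponentIn (hKS i.2) : i.1 ∈ U i ∩ S).1
  obtain ⟨t, ht⟩ := hK.elim_finite_subcover U hUopen fun y hy ↦ mem_iUnion.2 ⟨⟨y, hy⟩, hmem _⟩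
  refine (Set.Finite.image (fun i : K ↦ V i) t.finite_toSet).subset ?_
  rintro _ ⟨y, hy, rfl⟩
  obtain ⟨i, hi, hyi⟩ := mem_iUnion₂.1 (ht hy)
  have hyC : y ∈ connectedComponentIn S i := hUS i ▸ ⟨hyi, hKS hy⟩
  exact ⟨i, hi, (hconst i (hKS i.2) y hyC).symm⟩

namespace Semiflow

variable {M : Type*} [MetricSpace M] (Φ : Semiflow M)

theorem continuous_orbit (y : M) : Continuous fun t ↦ Φ.toFun t y :=
  Φ.cont.comp (continuous_id.prodMk continuous_const)

theorem continuous_toFun (t : ℝ) : Continuous (Φ.toFun t) :=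
  Φ.cont.comp (continuous_const.prodMk continuous_id)

theorem toFun_sub_toFun {s u : ℝ} (hs : 0 ≤ s) (hsu : s ≤ u) (y : M) :
    Φ.toFun (u - s) (Φ.toFun s y) = Φ.toFun u y := by
  rw [Φ.map_add hs (sub_nonneg.2 hsu), sub_add_cancel]

variable {V : M → ℝ} {S : Set M}

theorem eventually_nhdsGT_orbit_le (hV : Continuous V)
    (hconst : ∀ x ∈ S, ∀ y ∈ connectedComponentIn S x, V y = V x)
    (hdec : ∀ x ∉ S, ∀ t : ℝ, 0 < t → V (Φ.toFun t x) < V x) (y : M) {s : ℝ} (hs : 0 ≤ s) :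
    ∀ᶠ u in 𝓝[>] s, V (Φ.toFun u y) ≤ V (Φ.toFun s y) := by
  have hstep : ∀ w u, 0 ≤ w → w < u → Φ.toFun w y ∉ S → V (Φ.toFun u y) < V (Φ.toFun w y) :=
    fun w u hw hwu hwS ↦ Φ.toFun_sub_toFun hw hwu.le y ▸ hdec _ hwS _ (sub_pos.2 hwu)
  by_cases hp : Φ.toFun s y ∈ S
  swap
  · filter_upwards [self_mem_nhdsWithin] with u hu using (hstep s u hs hu hp).le
  by_cases hfreq : ∃ᶠ u in 𝓝[>] s, Φ.toFun u y ∉ S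
  · -- exits from `S` accumulate at `s`, and `V` only drops after each of them
    filter_upwards [self_mem_nhdsWithin] with u (hu : s < u)
    refine ge_of_tendsto_of_frequently
      ((hV.comp (Φ.continuous_orbit y)).continuousAt.continuousWithinAt (s := Ioi s)) ?_
    refine (hfreq.and_eventually (Ioo_mem_nhdsGT hu)).mono fun w ⟨hwS, hw⟩ ↦ ?_
    exact (hstep w u (hs.trans hw.1.le) hw.2 hwS).le
  · rw [not_frequently] at hfreq
    simp only [not_not] at hfreq
    obtain ⟨u', hsu', hsub⟩ := mem_nhdsGT_iff_exists_Ioo_subset.1 hfreq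
    have hcomp : (fun u ↦ Φ.toFun u y) '' Ico s u' ⊆ connectedComponentIn S (Φ.toFun s y) := by
      refine (isPreconnected_Ico.image _ (Φ.continuous_orbit y).continuousOn)
        |>.subset_connectedComponentIn ⟨s, left_mem_Ico.2 hsu', rfl⟩ ?_
      rintro _ ⟨u, hu, rfl⟩
      rcases hu.1.eq_or_lt with rfl | h
      exacts [hp, hsub ⟨h, hu.2⟩]
    filter_upwards [Ioo_mem_nhdsGT hsu'] with u hu
    exact (hconst _ hp _ (hcomp ⟨u, Ioo_subset_Ico_self hu, rfl⟩)).le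

theorem antitoneOn_orbit (hV : Continuous V)
    (hconst : ∀ x ∈ S, ∀ y ∈ connectedComponentIn S x, V y = V x)
    (hdec : ∀ x ∉ S, ∀ t : ℝ, 0 < t → V (Φ.toFun t x) < V x) (y : M) :
    AntitoneOn (fun t ↦ V (Φ.toFun t y)) (Ici 0) :=
  antitoneOn_of_eventually_nhdsGT_le ordConnected_Ici
    (hV.comp (Φ.continuous_orbit y)).continuousOn
    fun _ hs ↦ Φ.eventually_nhdsGT_orbit_le hV hconst hdec y hs

theorem not_isChain_of_forall_dist_lt {ε T : ℝ} {x : M} {P : Set M} (hx : x ∉ P)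
    (hP : ∀ z ∈ insert x P, ∀ t, T < t → ∀ y, dist (Φ.toFun t z) y < ε → y ∈ P) :
    ¬ Φ.IsChain ε T x := by
  rintro ⟨n, xs, ts, hn, h0, hlast, hchain⟩
  have hmem : ∀ i, xs i ∈ insert x P :=
    Fin.induction (h0 ▸ mem_insert _ _) fun i hi ↦
      mem_insert_of_mem _ (hP _ hi _ (hchain i).1 _ (hchain i).2)
  obtain ⟨m, rfl⟩ := Nat.exists_eq_succ_of_ne_zero hn.ne'
  apply hx
  rw [← hlast, ← Fin.succ_last]
  exact hP _ (hmem _) _ (hchain _).1 _ (hchain _).2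

end Semiflow

/-- If a continuous semiflow admits a proper continuous `V` and `S ⊆ M`
such that `V` is constant on each connected component of `S`, each connected component of
`S` is isolated (open in `S`), and `V` is strictly decreasing along trajectories outside
`S`, then the chain recurrent set of `Φ` is contained in `S`. -/
theorem chainRecurrentSet_subset_of_isolated_components
    {M : Type*} [MetricSpace M] (Φ : Semiflow M) (V : M → ℝ) (S : Set M)
    (hVcont : Continuous V)
    (hVproper : ∀ c : ℝ, IsCompact {x : M | V x ≤ c})
    (hconst : ∀ x ∈ S, ∀ y ∈ connectedComponentIn S x, V y = V x)
    (hiso : ∀ x ∈ S, ∃ U : Set M, IsOpen U ∧ U ∩ S = connectedComponentIn S x)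
    (hdec : ∀ x ∉ S, ∀ t : ℝ, 0 < t → V (Φ.toFun t x) < V x) :
    Φ.chainRecurrentSet ⊆ S := by
  intro x hx
  by_contra hxS
  have hanti := Φ.antitoneOn_orbit hVcont hconst hdec
  have hdrop : ∀ y, V (Φ.toFun 1 y) ≤ V y := fun y ↦ by
    simpa only [Φ.map_zero] using hanti y (mem_Ici.2 le_rfl) (mem_Ici.2 zero_le_one) zero_le_one
  set Z := {y | V y ≤ V x} ∩ {y | V (Φ.toFun 1 y) = V y}
  have hZS : Z ⊆ S := fun y hy ↦ by_contra fun hyS ↦ (hdec y hyS 1 one_pos).ne hy.2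
  have hZ : IsCompact Z := (hVproper _).inter_right
    (isClosed_eq (hVcont.comp (Φ.continuous_toFun 1)) hVcont)
  -- `V` takes finitely many values on the compact set `Z ⊆ S`, so some level `b` avoids them
  obtain ⟨b, ⟨hxb, hbx⟩, hbZ⟩ := ((Ioo_infinite (hdec x hxS 1 one_pos)).sdiff
    (hZ.finite_image_of_isOpen_connectedComponentIn hZS hconst hiso)).nonempty
  have hlt : ∀ z ∈ insert x {y | V y ≤ b}, V (Φ.toFun 1 z) < b := by
    rintro z (rfl | hz)
    · exact hxb
    rcases (show V z ≤ b from hz).lt_or_eq with hz | rfl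
    · exact (hdrop z).trans_lt hz
    · exact (hdrop z).lt_of_ne fun h ↦ hbZ ⟨z, ⟨hbx.le, h⟩, rfl⟩
  -- read in `ℝᵒᵈ`, `exists_forall_le'` gives a uniform bound `b' < b`
  obtain ⟨b', hb', hb'z⟩ := ((hVproper b).insert x).exists_forall_le' (α := ℝᵒᵈ)
    (hVcont.comp (Φ.continuous_toFun 1)).continuousOn hlt
  obtain ⟨ε, hε, hεb⟩ := (hVproper b').exists_thickening_subset_open
    (isOpen_lt hVcont continuous_const) fun y hy ↦ show V y < b from lt_of_le_of_lt hy hb'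
  refine Φ.not_isChain_of_forall_dist_lt (P := {y | V y ≤ b}) hbx.not_ge
    (fun z hz t ht y hy ↦ le_of_lt (show V y < b from hεb ?_)) (hx ε 1 hε one_pos)
  refine Metric.mem_thickening_iff.2 ⟨_, ?_, by rwa [dist_comm]⟩
  exact (hanti z (mem_Ici.2 zero_le_one) (mem_Ici.2 (zero_le_one.trans ht.le)) ht.le).trans
    (hb'z z hz)
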